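/- Let A be a finite commutative unitary ring with A ≠ {0} whose characteristic is different from 2. Then there exists an irreducible λ-quiddity over A of size at least max(4, car(A)), where car(A) denotes the characteristic of A, and every irreducible λ-quiddity over A has size at most |SL₂(A)|/(2|A|) + 2. -/

import Mathlib

/-- The matrix `[[a, -1], [1, 0]]`. -/
def mMat {A : Type*} [CommRing A] (a : A) : Matrix (Fin 2) (Fin 2) A := !![a, -1; 1, 0]

/-- `M_n(a₁, …, aₙ) = mMat aₙ * ⋯ * mMat a₁`, for the tuple given as a list `[a₁, …, aₙ]`. -/
def mProd {A : Type*} [CommRing A] (l : List A) : Matrix (Fin 2) (Fin 2) A :=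
  ((l.map mMat).reverse).prod

/-- The sum `(a₁,…,aₙ) ⊕ (b₁,…,b_m) = (a₁+b_m, a₂,…,a_{n−1}, aₙ+b₁, b₂,…,b_{m−1})`. -/
def oplus {A : Type*} [CommRing A] (a b : List A) : List A :=
  (a.headD 0 + b.getLastD 0) ::
    (a.dropLast.tail ++ (a.getLastD 0 + b.headD 0) :: b.dropLast.tail)

/-- Two tuples are equivalent if one is a cyclic rotation of the other or of its reversal. -/
def TupEquiv {A : Type*} (a b : List A) : Prop :=
  (∃ k, b = a.rotate k) ∨ (∃ k, b = a.reverse.rotate k)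

/-- A λ-quiddity over `R ⊆ A`: all entries lie in `R` and `M_n(a₁,…,aₙ) = ± Id`. -/
def IsQuiddity {A : Type*} [CommRing A] (R : Set A) (c : List A) : Prop :=
  (∀ x ∈ c, x ∈ R) ∧ (mProd c = 1 ∨ mProd c = -1)

/-- A λ-quiddity `c` over `R` is reducible if `c ∼ a ⊕ b` with `a ∈ R^m`, `m ≥ 3`,
and `b` a λ-quiddity over `R` of size `l ≥ 3`. -/
def IsReducible {A : Type*} [CommRing A] (R : Set A) (c : List A) : Prop :=
  ∃ a b : List A, 3 ≤ a.length ∧ 3 ≤ b.length ∧ (∀ x ∈ a, x ∈ R) ∧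
    IsQuiddity R b ∧ TupEquiv c (oplus a b)

/-- An irreducible λ-quiddity over `R`: a λ-quiddity of size `≥ 3` which is not reducible. -/
def IrreducibleQuiddity {A : Type*} [CommRing A] (R : Set A) (c : List A) : Prop :=
  IsQuiddity R c ∧ 3 ≤ c.length ∧ ¬ IsReducible R c

/-- The continuant `K_i(a₁,…,a_i)`, determinant of the tridiagonal matrix with diagonal
`a₁,…,a_i` and off-diagonal entries `1`; `K₀ = 1`. -/
def cont {A : Type*} [CommRing A] : List A → A
  | [] => 1
  | [a] => a
  | a :: b :: l => a * cont (b :: l) - cont l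

/-!
If a block `w` of consecutive entries of `c`, leaving at least three entries outside it, has
`M(w)₀₀ = σ = ±1`, then `c` is reducible: `b = (-σ M(w)₀₁, w, σ M(w)₁₀)` has `M(b) = -σ Id`, and `c`
is a rotation of `a ⊕ b`, where `a` is the complementary block with its end entries shifted to
compensate.

For the upper bound let `B = |SL₂(A)|/(2|A|)` and `P_i = M(c₁,…,c_i)` for `i ≤ B`. A coincidence
`P_i⁻¹e₀ = ±P_j⁻¹e₀` with `i < j` gives `(P_j P_i⁻¹)₀₀ = ±1`, i.e. a block as above. Otherwise the
`2(B+1)` vectors `±P_i⁻¹e₀` are distinct (as `2 ≠ 0`) points of the orbit of `e₀`, whose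
stabiliser contains the `|A|` transvections, and orbit–stabiliser gives `2(B+1)|A| ≤ |SL₂(A)|`,
which is absurd.

For existence, `M(2,…,2) = [[k+1, -k], [k, 1-k]]` for `k` twos, so `(2,…,2)` of length `car A`
is a quiddity none of whose blocks has corner `±1`; when `car A = 3` take `(0,0,0,0)` instead.
-/
open Matrix
open scoped MatrixGroups

lemma List.exists_eq_cons_append_singleton {α : Type*} {l : List α} (h : 2 ≤ l.length) :
    ∃ x m y, l = x :: m ++ [y] := by
  obtain ⟨x, t, rfl⟩ := List.exists_cons_of_length_pos (by omega : 0 < l.length)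
  rcases List.eq_nil_or_concat t with rfl | ⟨m, y, rfl⟩
  · simp at h
  · exact ⟨x, m, y, by simp⟩

lemma MulAction.card_mul_card_stabilizer_le_of_injective {G X ι : Type*} [Group G]
    [MulAction G X] [Finite G] {x : X} {g : ι → G} (hg : Function.Injective fun i => g i • x) :
    Nat.card ι * Nat.card (stabilizer G x) ≤ Nat.card G := by
  have : Finite (orbit G x) := (Finite.finite_mulAction_orbit x).to_subtype
  have hι : Nat.card ι ≤ (orbit G x).ncard := by
    rw [← Nat.card_coe_set_eq]
    exact Nat.card_le_card_of_injective (fun i => ⟨g i • x, mem_orbit x (g i)⟩)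
      fun i j h => hg (congrArg Subtype.val h)
  calc Nat.card ι * Nat.card (stabilizer G x)
      ≤ (orbit G x).ncard * Nat.card (stabilizer G x) := Nat.mul_le_mul_right _ hι
    _ = Nat.card G := by rw [← index_stabilizer, Subgroup.index_mul_card]

section

variable {A : Type*} [CommRing A]

lemma Matrix.SpecialLinearGroup.smul_single_one_apply {ι : Type*} [Fintype ι] [DecidableEq ι]
    (g : SpecialLinearGroup ι A) (i j : ι) : (g • (Pi.single j 1 : ι → A)) i = g i j := by
  simp [Matrix.SpecialLinearGroup.smul_def]

lemma Matrix.SpecialLinearGroup.card_le_card_stabilizer_single {ι : Type*} [Fintype ι]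
    [DecidableEq ι] [Finite A] {i j : ι} (hij : i ≠ j) :
    Nat.card A ≤ Nat.card (MulAction.stabilizer (SpecialLinearGroup ι A) (Pi.single i 1 : ι → A)) :=
  Nat.card_le_card_of_injective (fun b => ⟨transvection hij b, transvection_smul_single_fst hij b⟩)
    fun b c h => by
      simpa [transvection_coe, hij] using congrArg (fun g : SpecialLinearGroup ι A => g i j)
        (congrArg Subtype.val h)

lemma Matrix.SpecialLinearGroup.mul_inv_zero_zero_of_inv_smul_single {g h : SL(2, A)} {ε : A}
    (H : g⁻¹ • (Pi.single 0 1 : Fin 2 → A) = ε • h⁻¹ • (Pi.single 0 1 : Fin 2 → A)) :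
    (h * g⁻¹) 0 0 = ε := by
  calc (h * g⁻¹) 0 0 = ((h * g⁻¹) • (Pi.single 0 1 : Fin 2 → A)) 0 :=
        (SpecialLinearGroup.smul_single_one_apply _ _ _).symm
    _ = (ε • h • h⁻¹ • (Pi.single 0 1 : Fin 2 → A)) 0 := by rw [mul_smul, H, smul_comm h ε]
    _ = ε := by simp

lemma Matrix.SpecialLinearGroup.neg_smul (g : SL(2, A)) (v : Fin 2 → A) : (-g) • v = -(g • v) := by
  rw [SpecialLinearGroup.smul_def, SpecialLinearGroup.smul_def, SpecialLinearGroup.coe_neg,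
    _root_.neg_smul]

theorem Matrix.SpecialLinearGroup.two_mul_mul_card_le_card [Finite A] (hA : (-1 : A) ≠ 1) {k : ℕ}
    (P : Fin k → SL(2, A))
    (hP : ∀ i j, i < j → ¬((P j * (P i)⁻¹) 0 0 = 1 ∨ (P j * (P i)⁻¹) 0 0 = -1)) :
    2 * k * Nat.card A ≤ Nat.card SL(2, A) := by
  set e₀ : Fin 2 → A := Pi.single 0 1
  have hsep : ∀ i j (ε : A), (ε = 1 ∨ ε = -1) → (P i)⁻¹ • e₀ = ε • (P j)⁻¹ • e₀ →
      i = j ∧ ε = 1 := by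
    intro i j ε hε H
    rcases lt_trichotomy i j with hij | rfl | hij
    · exact absurd (SpecialLinearGroup.mul_inv_zero_zero_of_inv_smul_single H ▸ hε) (hP i j hij)
    · simpa [eq_comm] using SpecialLinearGroup.mul_inv_zero_zero_of_inv_smul_single H
    · have hε2 : ε * ε = 1 := by rcases hε with rfl | rfl <;> ring
      have H' : (P j)⁻¹ • e₀ = ε • (P i)⁻¹ • e₀ := by rw [H, smul_smul, hε2, one_smul]
      exact absurd (SpecialLinearGroup.mul_inv_zero_zero_of_inv_smul_single H' ▸ hε) (hP j i hij)
  let g : Fin k ⊕ Fin k → SL(2, A) := Sum.elim (fun i => (P i)⁻¹) (fun i => -(P i)⁻¹)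
  have hg : Function.Injective fun p => g p • e₀ := by
    rintro (i | i) (j | j) h <;>
      simp only [g, Sum.elim_inl, Sum.elim_inr, SpecialLinearGroup.neg_smul, neg_inj] at h
    · exact congrArg _ (hsep i j 1 (Or.inl rfl) (by rwa [one_smul])).1
    · exact absurd (hsep i j (-1) (Or.inr rfl) (by rwa [neg_one_smul])).2 hA
    · exact absurd (hsep i j (-1) (Or.inr rfl) (by rw [neg_one_smul, ← h, neg_neg])).2 hA
    · exact congrArg _ (hsep i j 1 (Or.inl rfl) (by rwa [one_smul])).1
  calc 2 * k * Nat.card A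
      ≤ Nat.card (Fin k ⊕ Fin k) * Nat.card (MulAction.stabilizer SL(2, A) e₀) := by
        rw [Nat.card_sum, Nat.card_fin, two_mul]
        exact Nat.mul_le_mul_left _ (SpecialLinearGroup.card_le_card_stabilizer_single zero_ne_one)
    _ ≤ Nat.card SL(2, A) := MulAction.card_mul_card_stabilizer_le_of_injective hg

@[simp]
lemma mProd_nil : mProd ([] : List A) = 1 := rfl

@[simp]
lemma mProd_cons (x : A) (l : List A) : mProd (x :: l) = mProd l * mMat x := by
  simp [mProd]

lemma mProd_append (s t : List A) : mProd (s ++ t) = mProd t * mProd s := by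
  simp [mProd]

lemma mProd_cons_append_singleton (x y : A) (m : List A) :
    mProd (x :: m ++ [y]) = mMat y * mProd m * mMat x := by
  simp [mProd_append, mul_assoc]

lemma det_mMat (a : A) : (mMat a).det = 1 := by simp [mMat]

lemma det_mProd (l : List A) : (mProd l).det = 1 := by
  induction l with
  | nil => simp
  | cons x l ih => rw [mProd_cons, det_mul, ih, det_mMat, one_mul]

def mProdSL (l : List A) : SL(2, A) := ⟨mProd l, det_mProd l⟩

lemma mProdSL_append (s t : List A) : mProdSL (s ++ t) = mProdSL t * mProdSL s :=
  Subtype.ext (mProd_append s t)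

lemma oplus_cons_append_singleton (x y u v : A) (m w : List A) :
    oplus (x :: m ++ [y]) (u :: w ++ [v]) = (x + v) :: m ++ (y + u) :: w := by
  simp [oplus, List.dropLast_cons_of_ne_nil, List.getLastD_eq_getLast?,
    List.getLast?_cons]

lemma mMat_mul_mul_mMat {M : Matrix (Fin 2) (Fin 2) A} (hM : M.det = 1) {σ : A}
    (hσ : σ * σ = 1) (h0 : M 0 0 = σ) :
    mMat (σ * M 1 0) * M * mMat (-(σ * M 0 1)) = (-σ) • (1 : Matrix (Fin 2) (Fin 2) A) := by
  rw [det_fin_two, h0] at hM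
  ext i j
  fin_cases i <;> fin_cases j <;>
    simp [mMat, mul_apply, Fin.sum_univ_two, vecMul, dotProduct, h0] <;> grind

lemma isReducible_of_mProd_zero_zero {u w v : List A} (hw : w ≠ [])
    (huv : 3 ≤ u.length + v.length) (h00 : mProd w 0 0 = 1 ∨ mProd w 0 0 = -1) :
    IsReducible Set.univ (u ++ w ++ v) := by
  set M := mProd w
  set σ := M 0 0
  have hσ : σ * σ = 1 := by rcases h00 with h | h <;> rw [h] <;> ring
  obtain ⟨e, m, z, hvu⟩ := List.exists_eq_cons_append_singleton
    (show 2 ≤ (v ++ u).length by rw [List.length_append]; omega)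
  refine ⟨(e - σ * M 1 0) :: m ++ [z + σ * M 0 1], (-(σ * M 0 1)) :: w ++ [σ * M 1 0],
    ?_, ?_, fun x _ => trivial, ⟨fun x _ => trivial, ?_⟩, Or.inl ⟨(u ++ w).length, ?_⟩⟩
  · have := congrArg List.length hvu
    simp only [List.length_append, List.cons_append, List.length_cons, List.length_nil] at this ⊢
    omega
  · have := List.length_pos_iff.mpr hw
    simp only [List.length_append, List.cons_append, List.length_cons, List.length_nil]
    omega
  · rw [mProd_cons_append_singleton, mMat_mul_mul_mMat (det_mProd w) hσ rfl]
    rcases h00 with h | h <;> simp [σ, h]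
  · rw [oplus_cons_append_singleton, sub_add_cancel, add_neg_cancel_right,
      List.rotate_append_length_eq, ← List.append_assoc, hvu]
    simp

lemma mProdSL_drop_take (c : List A) {i j : ℕ} (hij : i ≤ j) :
    mProdSL ((c.drop i).take (j - i)) = mProdSL (c.take j) * (mProdSL (c.take i))⁻¹ := by
  rw [eq_mul_inv_iff_mul_eq, ← mProdSL_append, ← List.take_add, Nat.add_sub_cancel' hij]

theorem length_le_of_irreducibleQuiddity [Finite A] (hA : (-1 : A) ≠ 1) {c : List A}
    (hc : IrreducibleQuiddity Set.univ c) :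
    c.length ≤ Nat.card SL(2, A) / (2 * Nat.card A) + 2 := by
  by_contra! hlen
  set B := Nat.card SL(2, A) / (2 * Nat.card A)
  have hP : ∀ i j : Fin (B + 1), i < j →
      ¬((mProdSL (c.take j) * (mProdSL (c.take i))⁻¹) 0 0 = 1 ∨
        (mProdSL (c.take j) * (mProdSL (c.take i))⁻¹) 0 0 = -1) := by
    intro i j hij h00
    have hij' : (i : ℕ) < j := hij
    have hj : (j : ℕ) ≤ B := Nat.lt_succ_iff.mp j.isLt
    rw [← mProdSL_drop_take c hij'.le] at h00
    apply hc.2.2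
    have hsplit : c.take i ++ (c.drop i).take (j - i) ++ c.drop j = c := by
      rw [← List.take_add, Nat.add_sub_cancel' hij'.le, List.take_append_drop]
    rw [← hsplit]
    refine isReducible_of_mProd_zero_zero ?_ ?_ h00
    · rw [← List.length_pos_iff]
      simp only [List.length_take, List.length_drop]
      omega
    · simp only [List.length_take, List.length_drop]
      omega
  have hcard := SpecialLinearGroup.two_mul_mul_card_le_card hA _ hP
  have : B + 1 ≤ B :=
    (Nat.le_div_iff_mul_le (Nat.mul_pos two_pos Nat.card_pos)).mpr (by linarith)
  omega

lemma mProd_zero_zero_of_isQuiddity {R : Set A} {x y : A} {m : List A}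
    (h : IsQuiddity R (x :: m ++ [y])) : mProd m 0 0 = 1 ∨ mProd m 0 0 = -1 := by
  have h11 : mProd (x :: m ++ [y]) 1 1 = -mProd m 0 0 := by
    rw [mProd_cons_append_singleton]
    simp [mMat, mul_apply, Fin.sum_univ_two, vecMul, dotProduct]
  rcases h.2 with h | h <;> rw [h] at h11 <;>
    simp only [one_apply_eq, Matrix.neg_apply, neg_inj] at h11
  · exact Or.inr (by linear_combination h11)
  · exact Or.inl h11.symm

lemma exists_mProd_replicate_zero_zero_of_isReducible {R : Set A} {N : ℕ} {x : A}
    (h : IsReducible R (List.replicate N x)) :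
    ∃ g, 1 ≤ g ∧ g + 3 ≤ N ∧
      (mProd (List.replicate g x) 0 0 = 1 ∨ mProd (List.replicate g x) 0 0 = -1) := by
  obtain ⟨a, b, ha, hb, -, hqb, hab⟩ := h
  have hab : oplus a b = List.replicate N x := by
    rcases hab with ⟨k, hk⟩ | ⟨k, hk⟩ <;> simp [hk, List.rotate_replicate]
  obtain ⟨x₀, m, z₀, rfl⟩ := List.exists_eq_cons_append_singleton (by omega : 2 ≤ a.length)
  obtain ⟨y₀, w, y₁, rfl⟩ := List.exists_eq_cons_append_singleton (by omega : 2 ≤ b.length)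
  rw [oplus_cons_append_singleton] at hab
  have hw : w = List.replicate w.length x :=
    List.eq_replicate_iff.mpr
      ⟨rfl, fun e he => List.eq_of_mem_replicate (by rw [← hab]; simp [he])⟩
  have hN := congrArg List.length hab
  simp only [List.length_append, List.cons_append, List.length_cons, List.length_nil,
    List.length_replicate] at ha hb hN
  exact ⟨w.length, by omega, by omega, hw ▸ mProd_zero_zero_of_isQuiddity hqb⟩

lemma mProd_replicate_two (k : ℕ) :
    mProd (List.replicate k (2 : A)) = !![(k : A) + 1, -k; k, 1 - k] := by
  induction k with
  | zero => simp [one_fin_two]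
  | succ k ih =>
    rw [List.replicate_succ, mProd_cons, ih, mMat, mul_fin_two]
    push_cast
    ring_nf

lemma irreducibleQuiddity_replicate_two {R : Set A} (h2 : (2 : A) ∈ R) {p : ℕ} [CharP A p]
    (hp : 3 ≤ p) : IrreducibleQuiddity R (List.replicate p (2 : A)) := by
  refine ⟨⟨fun x hx => List.eq_of_mem_replicate hx ▸ h2, Or.inl ?_⟩, by simpa, fun h => ?_⟩
  · simp [mProd_replicate_two, one_fin_two]
  obtain ⟨g, hg1, hg3, h00⟩ := exists_mProd_replicate_zero_zero_of_isReducible h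
  rw [mProd_replicate_two] at h00
  have hdvd : p ∣ g ∨ p ∣ g + 2 := by
    simp only [of_apply, cons_val', cons_val_zero, empty_val', cons_val_fin_one] at h00
    rw [← CharP.cast_eq_zero_iff A, ← CharP.cast_eq_zero_iff A]
    push_cast
    exact h00.imp (fun h => by linear_combination h) fun h => by linear_combination h
  rcases hdvd with h | h <;> have := Nat.le_of_dvd (by omega) h <;> omega

lemma irreducibleQuiddity_replicate_zero [Nontrivial A] {R : Set A} (h0 : (0 : A) ∈ R) :
    IrreducibleQuiddity R (List.replicate 4 (0 : A)) := by
  refine ⟨⟨fun x hx => List.eq_of_mem_replicate hx ▸ h0, Or.inl ?_⟩, by simp, fun h => ?_⟩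
  · simp [List.replicate, mMat, one_fin_two]
  obtain ⟨g, hg1, hg3, h00⟩ := exists_mProd_replicate_zero_zero_of_isReducible h
  obtain rfl : g = 1 := by omega
  simp [mMat] at h00

end

/-- Over a finite nontrivial commutative ring of characteristic different from 2, there is an
irreducible λ-quiddity of size at least `max 4 (car A)` and every irreducible λ-quiddity has
size at most `|SL₂(A)|/(2|A|) + 2`. -/
theorem stmt2 {A : Type*} [CommRing A] [Fintype A] [Nontrivial A]
    (hchar : ringChar A ≠ 2) :
    (∃ c : List A, IrreducibleQuiddity Set.univ c ∧ max 4 (ringChar A) ≤ c.length) ∧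
    (∀ c : List A, IrreducibleQuiddity Set.univ c →
      c.length ≤ Nat.card (Matrix.SpecialLinearGroup (Fin 2) A) / (2 * Nat.card A) + 2) := by
  have hA : (-1 : A) ≠ 1 := Ring.neg_one_ne_one_of_char_ne_two hchar
  refine ⟨?_, fun c hc => length_le_of_irreducibleQuiddity hA hc⟩
  have : ringChar A ≠ 0 := CharP.char_ne_zero_of_finite A _
  have : ringChar A ≠ 1 := CharP.ringChar_ne_one
  by_cases h4 : 4 ≤ ringChar A
  · refine ⟨_, irreducibleQuiddity_replicate_two (Set.mem_univ _) (by omega), ?_⟩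
    rw [List.length_replicate]
    omega
  · refine ⟨_, irreducibleQuiddity_replicate_zero (Set.mem_univ _), ?_⟩
    rw [List.length_replicate]
    omega
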